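/- Let (A, ▷, ◁) be an L-dendriform superalgebra over a field of characteristic zero, with vertical pre-Lie product x ∘ y := x▷y − (−1)^{|x||y|} y◁x and horizontal pre-Lie product x • y := x▷y + x◁y. Then the bracket [x,y] := x▷y + x◁y − (−1)^{|x||y|}(y▷x) − (−1)^{|x||y|}(y◁x), defined for homogeneous x, y, makes (A, [·,·]) a Lie superalgebra, and this bracket coincides with both commutators: [x,y] = x∘y − (−1)^{|x||y|} y∘x = x•y − (−1)^{|x||y|} y•x. In particular, (A, ∘) and (A, •) have the same sub-adjacent Lie superalgebra. -/
import Mathlib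


/-- The super sign `(−1)^{|x||y|}` for parities `i`, `j`. -/
def sgn (K : Type*) [Field K] (i j : ZMod 2) : K := (-1 : K) ^ (i.val * j.val)

/-- The bracket `[x,y] := x▷y + x◁y − (−1)^{|x||y|}(y▷x) − (−1)^{|x||y|}(y◁x)` on
homogeneous elements of parities `i`, `j`. -/
def ldBr {K A : Type*} [Field K] [AddCommGroup A] [Module K A]
    (rt lt : A →ₗ[K] A →ₗ[K] A) (i j : ZMod 2) (x y : A) : A :=
  rt x y + lt x y - sgn K i j • rt y x - sgn K i j • lt y x

/-- The vertical product `x ∘ y := x▷y − (−1)^{|x||y|} y◁x`. -/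
def vert {K A : Type*} [Field K] [AddCommGroup A] [Module K A]
    (rt lt : A →ₗ[K] A →ₗ[K] A) (i j : ZMod 2) (x y : A) : A :=
  rt x y - sgn K i j • lt y x

/-- The horizontal product `x • y := x▷y + x◁y`. -/
def horz {K A : Type*} [Field K] [AddCommGroup A] [Module K A]
    (rt lt : A →ₗ[K] A →ₗ[K] A) (x y : A) : A := rt x y + lt x y

private lemma z00 : (0 + 0 : ZMod 2) = 0 := by decide
private lemma z01 : (0 + 1 : ZMod 2) = 1 := by decide
private lemma z10 : (1 + 0 : ZMod 2) = 1 := by decide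
private lemma z11 : (1 + 1 : ZMod 2) = 0 := by decide

private lemma s00 {K : Type*} [Field K] : sgn K 0 0 = 1 := by
  simp [sgn]
private lemma s01 {K : Type*} [Field K] : sgn K 0 1 = 1 := by
  simp [sgn]
private lemma s10 {K : Type*} [Field K] : sgn K 1 0 = 1 := by
  simp [sgn]
private lemma s11 {K : Type*} [Field K] : sgn K 1 1 = -1 := by
  norm_num [sgn, ZMod.val_one]

private lemma zmod2_cases (i : ZMod 2) : i = 0 ∨ i = 1 := by revert i; decide

private lemma sgn_comm {K : Type*} [Field K] (i j : ZMod 2) : sgn K i j = sgn K j i := by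
  rw [sgn, sgn, Nat.mul_comm]

private lemma sgn_mul_self {K : Type*} [Field K] (i j : ZMod 2) :
    sgn K i j * sgn K i j = 1 := by
  rw [sgn, ← pow_add]
  exact Even.neg_one_pow ⟨_, rfl⟩

set_option maxHeartbeats 1600000 in
/-- for an L-dendriform superalgebra `(A,▷,◁)`, the bracket
`[x,y] := x▷y + x◁y − (−1)^{|x||y|}(y▷x) − (−1)^{|x||y|}(y◁x)` makes `A` a Lie
superalgebra, and it coincides with the commutators of both the vertical product `∘`
and the horizontal product `•`; so `(A,∘)` and `(A,•)` have the same sub-adjacent Lie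
superalgebra. -/
theorem stmt16 {K A : Type*} [Field K] [CharZero K] [AddCommGroup A] [Module K A]
    (𝒜 : ZMod 2 → Submodule K A) (hgr : DirectSum.IsInternal 𝒜)
    (rt lt : A →ₗ[K] A →ₗ[K] A)
    (hrt_even : ∀ (i j : ZMod 2), ∀ x ∈ 𝒜 i, ∀ y ∈ 𝒜 j, rt x y ∈ 𝒜 (i + j))
    (hlt_even : ∀ (i j : ZMod 2), ∀ x ∈ 𝒜 i, ∀ y ∈ 𝒜 j, lt x y ∈ 𝒜 (i + j))
    (hLD1 : ∀ (i j k : ZMod 2), ∀ x ∈ 𝒜 i, ∀ y ∈ 𝒜 j, ∀ z ∈ 𝒜 k,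
      rt x (rt y z)
        = rt (rt x y) z + rt (lt x y) z + sgn K i j • rt y (rt x z)
          - sgn K i j • rt (lt y x) z - sgn K i j • rt (rt y x) z)
    (hLD2 : ∀ (i j k : ZMod 2), ∀ x ∈ 𝒜 i, ∀ y ∈ 𝒜 j, ∀ z ∈ 𝒜 k,
      rt x (lt y z)
        = lt (rt x y) z + sgn K i j • lt y (rt x z)
          + sgn K i j • lt y (lt x z) - sgn K i j • lt (lt y x) z) :
    -- the bracket is even
    (∀ (i j : ZMod 2), ∀ x ∈ 𝒜 i, ∀ y ∈ 𝒜 j, ldBr rt lt i j x y ∈ 𝒜 (i + j)) ∧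
    -- super skew-symmetry
    (∀ (i j : ZMod 2), ∀ x ∈ 𝒜 i, ∀ y ∈ 𝒜 j,
      ldBr rt lt i j x y = -(sgn K i j • ldBr rt lt j i y x)) ∧
    -- super-Jacobi identity
    (∀ (i j k : ZMod 2), ∀ x ∈ 𝒜 i, ∀ y ∈ 𝒜 j, ∀ z ∈ 𝒜 k,
      ldBr rt lt i (j + k) x (ldBr rt lt j k y z)
        = ldBr rt lt (i + j) k (ldBr rt lt i j x y) z
          + sgn K i j • ldBr rt lt j (i + k) y (ldBr rt lt i k x z)) ∧
    -- the bracket is the commutator of the vertical pre-Lie product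
    (∀ (i j : ZMod 2), ∀ x ∈ 𝒜 i, ∀ y ∈ 𝒜 j,
      ldBr rt lt i j x y = vert rt lt i j x y - sgn K i j • vert rt lt j i y x) ∧
    -- the bracket is the commutator of the horizontal pre-Lie product
    (∀ (i j : ZMod 2), ∀ x ∈ 𝒜 i, ∀ y ∈ 𝒜 j,
      ldBr rt lt i j x y = horz rt lt x y - sgn K i j • horz rt lt y x) := by
  refine ⟨?_, ?_, ?_, ?_, ?_⟩
  · intro i j x hx y hy
    have h1 := hrt_even i j x hx y hy
    have h2 := hlt_even i j x hx y hy
    have h3 := hrt_even j i y hy x hx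
    have h4 := hlt_even j i y hy x hx
    rw [add_comm] at h3 h4
    exact sub_mem (sub_mem (add_mem h1 h2) (Submodule.smul_mem _ _ h3))
      (Submodule.smul_mem _ _ h4)
  · intro i j x hx y hy
    have hc := sgn_comm (K := K) j i
    have hs := sgn_mul_self (K := K) i j
    simp only [ldBr, hc, smul_sub, smul_add, smul_smul, hs, one_smul]
    module
  · intro i j k x hx y hy z hz
    rcases zmod2_cases i with rfl | rfl <;> rcases zmod2_cases j with rfl | rfl <;>
      rcases zmod2_cases k with rfl | rfl
    ·
      have hE1xyz := hLD1 0 0 0 x hx y hy z hz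
      have hE2xyz := hLD2 0 0 0 x hx y hy z hz
      have hE1xzy := hLD1 0 0 0 x hx z hz y hy
      have hE2xzy := hLD2 0 0 0 x hx z hz y hy
      have hE2yxz := hLD2 0 0 0 y hy x hx z hz
      have hE1yzx := hLD1 0 0 0 y hy z hz x hx
      have hE2yzx := hLD2 0 0 0 y hy z hz x hx
      have hE2zxy := hLD2 0 0 0 z hz x hx y hy
      have hE2zyx := hLD2 0 0 0 z hz y hy x hx
      simp only [s00, s01, s10, s11, one_smul, neg_one_smul] at hE1xyz hE2xyz hE1xzy hE2xzy hE2yxz hE1yzx hE2yzx hE2zxy hE2zyx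
      simp only [ldBr, z00, z01, z10, z11, s00, s01, s10, s11, one_smul, neg_one_smul, map_add, map_sub, map_smul, map_neg, LinearMap.add_apply, LinearMap.sub_apply, LinearMap.smul_apply, LinearMap.neg_apply, smul_add, smul_sub, smul_neg, neg_neg]
      linear_combination (norm := module) hE1xyz + hE2xyz - hE1xzy - hE2xzy - hE2yxz + hE1yzx + hE2yzx + hE2zxy - hE2zyx
    ·
      have hE1xyz := hLD1 0 0 1 x hx y hy z hz
      have hE2xyz := hLD2 0 0 1 x hx y hy z hz
      have hE1xzy := hLD1 0 1 0 x hx z hz y hy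
      have hE2xzy := hLD2 0 1 0 x hx z hz y hy
      have hE2yxz := hLD2 0 0 1 y hy x hx z hz
      have hE1yzx := hLD1 0 1 0 y hy z hz x hx
      have hE2yzx := hLD2 0 1 0 y hy z hz x hx
      have hE2zxy := hLD2 1 0 0 z hz x hx y hy
      have hE2zyx := hLD2 1 0 0 z hz y hy x hx
      simp only [s00, s01, s10, s11, one_smul, neg_one_smul] at hE1xyz hE2xyz hE1xzy hE2xzy hE2yxz hE1yzx hE2yzx hE2zxy hE2zyx
      simp only [ldBr, z00, z01, z10, z11, s00, s01, s10, s11, one_smul, neg_one_smul, map_add, map_sub, map_smul, map_neg, LinearMap.add_apply, LinearMap.sub_apply, LinearMap.smul_apply, LinearMap.neg_apply, smul_add, smul_sub, smul_neg, neg_neg]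
      linear_combination (norm := module) hE1xyz + hE2xyz - hE1xzy - hE2xzy - hE2yxz + hE1yzx + hE2yzx + hE2zxy - hE2zyx
    ·
      have hE1xyz := hLD1 0 1 0 x hx y hy z hz
      have hE2xyz := hLD2 0 1 0 x hx y hy z hz
      have hE1xzy := hLD1 0 0 1 x hx z hz y hy
      have hE2xzy := hLD2 0 0 1 x hx z hz y hy
      have hE2yxz := hLD2 1 0 0 y hy x hx z hz
      have hE1yzx := hLD1 1 0 0 y hy z hz x hx
      have hE2yzx := hLD2 1 0 0 y hy z hz x hx
      have hE2zxy := hLD2 0 0 1 z hz x hx y hy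
      have hE2zyx := hLD2 0 1 0 z hz y hy x hx
      simp only [s00, s01, s10, s11, one_smul, neg_one_smul] at hE1xyz hE2xyz hE1xzy hE2xzy hE2yxz hE1yzx hE2yzx hE2zxy hE2zyx
      simp only [ldBr, z00, z01, z10, z11, s00, s01, s10, s11, one_smul, neg_one_smul, map_add, map_sub, map_smul, map_neg, LinearMap.add_apply, LinearMap.sub_apply, LinearMap.smul_apply, LinearMap.neg_apply, smul_add, smul_sub, smul_neg, neg_neg]
      linear_combination (norm := module) hE1xyz + hE2xyz - hE1xzy - hE2xzy - hE2yxz + hE1yzx + hE2yzx + hE2zxy - hE2zyx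
    ·
      have hE1xyz := hLD1 0 1 1 x hx y hy z hz
      have hE2xyz := hLD2 0 1 1 x hx y hy z hz
      have hE1xzy := hLD1 0 1 1 x hx z hz y hy
      have hE2xzy := hLD2 0 1 1 x hx z hz y hy
      have hE2yxz := hLD2 1 0 1 y hy x hx z hz
      have hE1yzx := hLD1 1 1 0 y hy z hz x hx
      have hE2yzx := hLD2 1 1 0 y hy z hz x hx
      have hE2zxy := hLD2 1 0 1 z hz x hx y hy
      have hE2zyx := hLD2 1 1 0 z hz y hy x hx
      simp only [s00, s01, s10, s11, one_smul, neg_one_smul] at hE1xyz hE2xyz hE1xzy hE2xzy hE2yxz hE1yzx hE2yzx hE2zxy hE2zyx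
      simp only [ldBr, z00, z01, z10, z11, s00, s01, s10, s11, one_smul, neg_one_smul, map_add, map_sub, map_smul, map_neg, LinearMap.add_apply, LinearMap.sub_apply, LinearMap.smul_apply, LinearMap.neg_apply, smul_add, smul_sub, smul_neg, neg_neg]
      linear_combination (norm := module) hE1xyz + hE2xyz + hE1xzy + hE2xzy - hE2yxz + hE1yzx + hE2yzx - hE2zxy + hE2zyx
    ·
      have hE1xyz := hLD1 1 0 0 x hx y hy z hz
      have hE2xyz := hLD2 1 0 0 x hx y hy z hz
      have hE1xzy := hLD1 1 0 0 x hx z hz y hy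
      have hE2xzy := hLD2 1 0 0 x hx z hz y hy
      have hE2yxz := hLD2 0 1 0 y hy x hx z hz
      have hE1yzx := hLD1 0 0 1 y hy z hz x hx
      have hE2yzx := hLD2 0 0 1 y hy z hz x hx
      have hE2zxy := hLD2 0 1 0 z hz x hx y hy
      have hE2zyx := hLD2 0 0 1 z hz y hy x hx
      simp only [s00, s01, s10, s11, one_smul, neg_one_smul] at hE1xyz hE2xyz hE1xzy hE2xzy hE2yxz hE1yzx hE2yzx hE2zxy hE2zyx
      simp only [ldBr, z00, z01, z10, z11, s00, s01, s10, s11, one_smul, neg_one_smul, map_add, map_sub, map_smul, map_neg, LinearMap.add_apply, LinearMap.sub_apply, LinearMap.smul_apply, LinearMap.neg_apply, smul_add, smul_sub, smul_neg, neg_neg]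
      linear_combination (norm := module) hE1xyz + hE2xyz - hE1xzy - hE2xzy - hE2yxz + hE1yzx + hE2yzx + hE2zxy - hE2zyx
    ·
      have hE1xyz := hLD1 1 0 1 x hx y hy z hz
      have hE2xyz := hLD2 1 0 1 x hx y hy z hz
      have hE1xzy := hLD1 1 1 0 x hx z hz y hy
      have hE2xzy := hLD2 1 1 0 x hx z hz y hy
      have hE2yxz := hLD2 0 1 1 y hy x hx z hz
      have hE1yzx := hLD1 0 1 1 y hy z hz x hx
      have hE2yzx := hLD2 0 1 1 y hy z hz x hx
      have hE2zxy := hLD2 1 1 0 z hz x hx y hy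
      have hE2zyx := hLD2 1 0 1 z hz y hy x hx
      simp only [s00, s01, s10, s11, one_smul, neg_one_smul] at hE1xyz hE2xyz hE1xzy hE2xzy hE2yxz hE1yzx hE2yzx hE2zxy hE2zyx
      simp only [ldBr, z00, z01, z10, z11, s00, s01, s10, s11, one_smul, neg_one_smul, map_add, map_sub, map_smul, map_neg, LinearMap.add_apply, LinearMap.sub_apply, LinearMap.smul_apply, LinearMap.neg_apply, smul_add, smul_sub, smul_neg, neg_neg]
      linear_combination (norm := module) hE1xyz + hE2xyz - hE1xzy - hE2xzy - hE2yxz - hE1yzx - hE2yzx - hE2zxy + hE2zyx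
    ·
      have hE1xyz := hLD1 1 1 0 x hx y hy z hz
      have hE2xyz := hLD2 1 1 0 x hx y hy z hz
      have hE1xzy := hLD1 1 0 1 x hx z hz y hy
      have hE2xzy := hLD2 1 0 1 x hx z hz y hy
      have hE2yxz := hLD2 1 1 0 y hy x hx z hz
      have hE1yzx := hLD1 1 0 1 y hy z hz x hx
      have hE2yzx := hLD2 1 0 1 y hy z hz x hx
      have hE2zxy := hLD2 0 1 1 z hz x hx y hy
      have hE2zyx := hLD2 0 1 1 z hz y hy x hx
      simp only [s00, s01, s10, s11, one_smul, neg_one_smul] at hE1xyz hE2xyz hE1xzy hE2xzy hE2yxz hE1yzx hE2yzx hE2zxy hE2zyx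
      simp only [ldBr, z00, z01, z10, z11, s00, s01, s10, s11, one_smul, neg_one_smul, map_add, map_sub, map_smul, map_neg, LinearMap.add_apply, LinearMap.sub_apply, LinearMap.smul_apply, LinearMap.neg_apply, smul_add, smul_sub, smul_neg, neg_neg]
      linear_combination (norm := module) hE1xyz + hE2xyz - hE1xzy - hE2xzy + hE2yxz - hE1yzx - hE2yzx + hE2zxy + hE2zyx
    ·
      have hE1xyz := hLD1 1 1 1 x hx y hy z hz
      have hE2xyz := hLD2 1 1 1 x hx y hy z hz
      have hE1xzy := hLD1 1 1 1 x hx z hz y hy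
      have hE2xzy := hLD2 1 1 1 x hx z hz y hy
      have hE2yxz := hLD2 1 1 1 y hy x hx z hz
      have hE1yzx := hLD1 1 1 1 y hy z hz x hx
      have hE2yzx := hLD2 1 1 1 y hy z hz x hx
      have hE2zxy := hLD2 1 1 1 z hz x hx y hy
      have hE2zyx := hLD2 1 1 1 z hz y hy x hx
      simp only [s00, s01, s10, s11, one_smul, neg_one_smul] at hE1xyz hE2xyz hE1xzy hE2xzy hE2yxz hE1yzx hE2yzx hE2zxy hE2zyx
      simp only [ldBr, z00, z01, z10, z11, s00, s01, s10, s11, one_smul, neg_one_smul, map_add, map_sub, map_smul, map_neg, LinearMap.add_apply, LinearMap.sub_apply, LinearMap.smul_apply, LinearMap.neg_apply, smul_add, smul_sub, smul_neg, neg_neg]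
      linear_combination (norm := module) hE1xyz + hE2xyz + hE1xzy + hE2xzy + hE2yxz + hE1yzx + hE2yzx + hE2zxy + hE2zyx
  · intro i j x hx y hy
    have hc := sgn_comm (K := K) j i
    have hs := sgn_mul_self (K := K) i j
    simp only [ldBr, vert, hc, smul_sub, smul_smul, hs, one_smul]
    module
  · intro i j x hx y hy
    simp only [ldBr, horz, smul_add]
    module
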